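/- With J(I) the CA-ML instance constructed from a restricted SMTI instance I as described, a matching in J(I) is course-complete if and only if it is student-complete. -/

import Mathlib

open Finset

/-- An instance of the Course Allocation problem: students `S`, courses `C`,
mutual acceptability `acc`, strict preferences of students over (acceptable) courses
and of courses over (acceptable) students, positive credits, upper quotas and credit limits. -/
structure CA (S C : Type*) where
  acc : S → C → Prop
  sPref : S → C → C → Prop
  cPref : C → S → S → Prop
  credits : C → ℚ
  quota : C → ℕ
  limit : S → ℚ
  credits_pos : ∀ c, 0 < credits c
  sPref_irrefl : ∀ s c, ¬ sPref s c c
  sPref_trans : ∀ s c₁ c₂ c₃, sPref s c₁ c₂ → sPref s c₂ c₃ → sPref s c₁ c₃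
  sPref_total : ∀ s c₁ c₂, acc s c₁ → acc s c₂ → c₁ ≠ c₂ → sPref s c₁ c₂ ∨ sPref s c₂ c₁
  cPref_irrefl : ∀ c s, ¬ cPref c s s
  cPref_trans : ∀ c s₁ s₂ s₃, cPref c s₁ s₂ → cPref c s₂ s₃ → cPref c s₁ s₃
  cPref_total : ∀ c s₁ s₂, acc s₁ c → acc s₂ c → s₁ ≠ s₂ → cPref c s₁ s₂ ∨ cPref c s₂ s₁

section CourseAllocation

variable {S C : Type*} [DecidableEq S] [DecidableEq C]

/-- The set `C_M(s)` of courses assigned to student `s` in assignment `M`. -/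
def CM (M : Finset (S × C)) (s : S) : Finset C :=
  (M.filter fun p => p.1 = s).image Prod.snd

/-- The set `S_M(c)` of students assigned to course `c` in assignment `M`. -/
def SM (M : Finset (S × C)) (c : C) : Finset S :=
  (M.filter fun p => p.2 = c).image Prod.fst

/-- The total number of credits `O(D)` of a set of courses `D`. -/
def CA.O (I : CA S C) (D : Finset C) : ℚ := ∑ c ∈ D, I.credits c

/-- `M` is a matching: all pairs acceptable, credit limits and upper quotas respected. -/
def CA.IsMatching (I : CA S C) (M : Finset (S × C)) : Prop :=
  (∀ p ∈ M, I.acc p.1 p.2) ∧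
  (∀ s, I.O (CM M s) ≤ I.limit s) ∧
  (∀ c, (SM M c).card ≤ I.quota c)

/-- Feasibility of a matching with respect to families `F` of feasible course sets. -/
def Feasible (F : S → Set (Finset C)) (M : Finset (S × C)) : Prop :=
  ∀ s, CM M s ∈ F s

/-- `F` is a family of downward-feasible constraints: every feasible set consists of
acceptable courses, and subsets of feasible sets are feasible. -/
def CA.DownwardFeasible (I : CA S C) (F : S → Set (Finset C)) : Prop :=
  (∀ s, ∀ D ∈ F s, ∀ c ∈ D, I.acc s c) ∧
  (∀ s, ∀ D ∈ F s, ∀ D' ⊆ D, D' ∈ F s)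

/-- Absent downward-feasible constraints (every set of courses feasible). -/
def noF : S → Set (Finset C) := fun _ => Set.univ

/-- Condition (1) of all blocking definitions: course `c` is undersubscribed in `M`
or prefers `s` to one of its assigned students. -/
def CA.Wants (I : CA S C) (M : Finset (S × C)) (s : S) (c : C) : Prop :=
  (SM M c).card < I.quota c ∨ ∃ s' ∈ SM M c, I.cPref c s s'

/-- `(s, c)` is a blocking pair of `M` (w.r.t. feasibility constraints `F`). -/
def CA.BlockingPair (I : CA S C) (F : S → Set (Finset C)) (M : Finset (S × C))
    (s : S) (c : C) : Prop :=
  I.acc s c ∧ (s, c) ∉ M ∧ I.Wants M s c ∧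
  ∃ D ⊆ CM M s, (∀ c' ∈ D, I.sPref s c c') ∧
    I.O (CM M s) - I.O D + I.credits c ≤ I.limit s ∧
    (CM M s \ D) ∪ {c} ∈ F s

def CA.PairStable (I : CA S C) (F : S → Set (Finset C)) (M : Finset (S × C)) : Prop :=
  ∀ s c, ¬ I.BlockingPair F M s c

/-- `(s, c)` is a size-blocking pair of `M`: like a blocking pair, but additionally
the dropped set `D` must satisfy `O(D) ≤ O(c)`. -/
def CA.SizeBlockingPair (I : CA S C) (F : S → Set (Finset C)) (M : Finset (S × C))
    (s : S) (c : C) : Prop :=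
  I.acc s c ∧ (s, c) ∉ M ∧ I.Wants M s c ∧
  ∃ D ⊆ CM M s, (∀ c' ∈ D, I.sPref s c c') ∧ I.O D ≤ I.credits c ∧
    I.O (CM M s) - I.O D + I.credits c ≤ I.limit s ∧
    (CM M s \ D) ∪ {c} ∈ F s

def CA.PairSizeStable (I : CA S C) (F : S → Set (Finset C)) (M : Finset (S × C)) : Prop :=
  ∀ s c, ¬ I.SizeBlockingPair F M s c

/-- `(s, B)` is a blocking coalition of `M`. -/
def CA.BlockingCoalition (I : CA S C) (F : S → Set (Finset C)) (M : Finset (S × C))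
    (s : S) (B : Finset C) : Prop :=
  B.Nonempty ∧ (∀ c ∈ B, I.acc s c ∧ (s, c) ∉ M) ∧ (∀ c ∈ B, I.Wants M s c) ∧
  ∃ D ⊆ CM M s, (∀ c ∈ B, ∀ c' ∈ D, I.sPref s c c') ∧ I.O D ≤ I.O B ∧
    I.O (CM M s) - I.O D + I.O B ≤ I.limit s ∧
    (CM M s \ D) ∪ B ∈ F s

def CA.CoalitionStable (I : CA S C) (F : S → Set (Finset C)) (M : Finset (S × C)) : Prop :=
  ∀ s B, ¬ I.BlockingCoalition F M s B

/-- `(s, B)` is a first-blocking coalition of `M`: as a blocking coalition, except that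
`s` need only prefer her most-preferred course of `B` to her most-preferred course of `D`
(equivalently, some course of `B` is preferred to every course of `D`; vacuous if `D = ∅`). -/
def CA.FirstBlockingCoalition (I : CA S C) (F : S → Set (Finset C)) (M : Finset (S × C))
    (s : S) (B : Finset C) : Prop :=
  B.Nonempty ∧ (∀ c ∈ B, I.acc s c ∧ (s, c) ∉ M) ∧ (∀ c ∈ B, I.Wants M s c) ∧
  ∃ D ⊆ CM M s, (∃ b ∈ B, ∀ c' ∈ D, I.sPref s b c') ∧ I.O D ≤ I.O B ∧
    I.O (CM M s) - I.O D + I.O B ≤ I.limit s ∧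
    (CM M s \ D) ∪ B ∈ F s

def CA.FirstCoalitionStable (I : CA S C) (F : S → Set (Finset C)) (M : Finset (S × C)) : Prop :=
  ∀ s B, ¬ I.FirstBlockingCoalition F M s B

/-- Every course exactly fills its upper quota. -/
def CA.CourseComplete (I : CA S C) (M : Finset (S × C)) : Prop :=
  ∀ c, (SM M c).card = I.quota c

/-- Every student takes as many credits as her credit limit. -/
def CA.StudentComplete (I : CA S C) (M : Finset (S × C)) : Prop :=
  ∀ s, I.O (CM M s) = I.limit s

/-- The size of a matching: total number of credits taken by all students. -/
def CA.size [Fintype S] (I : CA S C) (M : Finset (S × C)) : ℚ :=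
  ∑ s : S, I.O (CM M s)

/-- `ml` is a master list of students for the instance `I`: a strict total order on
students with which every course's preferences are consistent. -/
def CA.MasterList (I : CA S C) (ml : S → S → Prop) : Prop :=
  (∀ s, ¬ ml s s) ∧ (∀ s₁ s₂ s₃, ml s₁ s₂ → ml s₂ s₃ → ml s₁ s₃) ∧
  (∀ s₁ s₂, s₁ ≠ s₂ → ml s₁ s₂ ∨ ml s₂ s₁) ∧
  (∀ c s s', I.acc s c → I.acc s' c → (I.cPref c s s' ↔ ml s s'))

end CourseAllocation
/-- Builds a `CA` instance from rank functions (smaller rank = more preferred), with a fixed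
injective tie-breaking that never fires when ranks are distinct on acceptable pairs. -/
def CA.ofRanks {S C : Type*} (acc : S → C → Prop) (srank : S → C → ℕ) (crank : C → S → ℕ)
    (iS : S → ℕ) (iC : C → ℕ) (hiS : Function.Injective iS) (hiC : Function.Injective iC)
    (credits : C → ℚ) (quota : C → ℕ) (limit : S → ℚ) (hpos : ∀ c, 0 < credits c) :
    CA S C where
  acc := acc
  sPref s c c' := acc s c ∧ acc s c' ∧
    (srank s c < srank s c' ∨ (srank s c = srank s c' ∧ iC c < iC c'))
  cPref c s s' := acc s c ∧ acc s' c ∧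
    (crank c s < crank c s' ∨ (crank c s = crank c s' ∧ iS s < iS s'))
  credits := credits
  quota := quota
  limit := limit
  credits_pos := hpos
  sPref_irrefl := by rintro s c ⟨-, -, h⟩; omega
  sPref_trans := by rintro s c₁ c₂ c₃ ⟨h1, -, ha⟩ ⟨-, h2, hb⟩; exact ⟨h1, h2, by omega⟩
  sPref_total := by
    intro s c₁ c₂ h1 h2 hne
    have hi : iC c₁ ≠ iC c₂ := fun h => hne (hiC h)
    rcases Nat.lt_trichotomy (srank s c₁) (srank s c₂) with h | h | h
    · exact Or.inl ⟨h1, h2, Or.inl h⟩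
    · rcases Nat.lt_or_ge (iC c₁) (iC c₂) with h' | h'
      · exact Or.inl ⟨h1, h2, Or.inr ⟨h, h'⟩⟩
      · exact Or.inr ⟨h2, h1, Or.inr ⟨h.symm, by omega⟩⟩
    · exact Or.inr ⟨h2, h1, Or.inl h⟩
  cPref_irrefl := by rintro c s ⟨-, -, h⟩; omega
  cPref_trans := by rintro c s₁ s₂ s₃ ⟨h1, -, ha⟩ ⟨-, h2, hb⟩; exact ⟨h1, h2, by omega⟩
  cPref_total := by
    intro c s₁ s₂ h1 h2 hne
    have hi : iS s₁ ≠ iS s₂ := fun h => hne (hiS h)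
    rcases Nat.lt_trichotomy (crank c s₁) (crank c s₂) with h | h | h
    · exact Or.inl ⟨h1, h2, Or.inl h⟩
    · rcases Nat.lt_or_ge (iS s₁) (iS s₂) with h' | h'
      · exact Or.inl ⟨h1, h2, Or.inr ⟨h, h'⟩⟩
      · exact Or.inr ⟨h2, h1, Or.inr ⟨h.symm, by omega⟩⟩
    · exact Or.inr ⟨h2, h1, Or.inl h⟩
/-- A restricted SMTI instance: `n` men and `n` women (both indexed by `Fin n`), with
mutual acceptability `acc m w`, a strict master list of men given by the injective
ranking `mrank`, and a master list of women with ties given by the ranking `wrank`,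
where ties (classes of equal `wrank`) have length at most 2, encoded by the tie-partner
involution `twin` (`twin j = j` exactly when `w_j` is not in a tie).  Every agent's
preference list is the restriction of the other side's master list to her/his
acceptable set. -/
structure RSMTI (n : ℕ) where
  acc : Fin n → Fin n → Prop
  mrank : Fin n → Fin n
  mrank_inj : Function.Injective mrank
  wrank : Fin n → ℕ
  twin : Fin n → Fin n
  twin_invol : ∀ j, twin (twin j) = j
  wrank_eq_iff : ∀ j k, wrank j = wrank k ↔ (k = j ∨ k = twin j)

/-- `σ` is a complete weakly stable matching of the restricted SMTI instance `I`:
it is a bijection between men and women along acceptable pairs, and no acceptable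
pair `(m, w)` exists where both `m` and `w` strictly prefer each other to their
partners (men's preferences come from the women's master list `wrank`, women's
preferences from the men's master list `mrank`). -/
def RSMTI.CompleteWeaklyStable {n : ℕ} (I : RSMTI n) (σ : Equiv.Perm (Fin n)) : Prop :=
  (∀ m, I.acc m (σ m)) ∧
  ∀ m w, ¬ (I.acc m w ∧ σ m ≠ w ∧
    I.wrank w < I.wrank (σ m) ∧ I.mrank m < I.mrank (σ.symm w))

/-- Woman `w_j` is tied in the women's master list and is the designated member of her
tie (the one whose course gets 1 credit, together with a twin 1-credit course). -/
def RSMTI.des {n : ℕ} (I : RSMTI n) (j : Fin n) : Prop :=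
  I.twin j ≠ j ∧ j < I.twin j

instance {n : ℕ} (I : RSMTI n) (j : Fin n) : Decidable (I.des j) :=
  inferInstanceAs (Decidable (I.twin j ≠ j ∧ j < I.twin j))
/-- Acceptability in `J(I)`: student `m` finds course `c_j = Sum.inl j` acceptable iff
`m` finds `w_j` acceptable; the twin course `c_j' = Sum.inr j` exists (has the same
preference list as `c_j`) only when `w_j` is the designated member of a tie. -/
def RSMTI.Jacc {n : ℕ} (I : RSMTI n) (m : Fin n) : Fin n ⊕ Fin n → Prop
  | .inl j => I.acc m j
  | .inr j => I.des j ∧ I.acc m j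

/-- Credits in `J(I)`: a non-designated woman's course has 2 credits, a designated
woman's course `c_j` and its twin `c_j'` have 1 credit each. -/
def RSMTI.Jcredits {n : ℕ} (I : RSMTI n) : Fin n ⊕ Fin n → ℚ
  | .inl j => if I.des j then 1 else 2
  | .inr _ => 1

/-- Upper quotas in `J(I)`: every course has upper quota 1; the twin slot `Sum.inr j`
of a non-designated woman is a phantom course with quota 0 (acceptable to nobody). -/
def RSMTI.Jquota {n : ℕ} (I : RSMTI n) : Fin n ⊕ Fin n → ℕ
  | .inl _ => 1
  | .inr j => if I.des j then 1 else 0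

/-- The rank of a course in the master list of courses of `J(I)`: the women's master
list with each untied `w_j` replaced by `c_j` and each tie `{w_k, w_l}` (with `w_k`
designated) replaced by `c_k ≻ c_l ≻ c_k'`.  All students rank courses accordingly. -/
def RSMTI.Jrank {n : ℕ} (I : RSMTI n) : Fin n ⊕ Fin n → ℕ
  | .inl j => 3 * I.wrank j + (if I.des j then 0 else if I.twin j ≠ j then 1 else 0)
  | .inr j => 3 * I.wrank j + 2

/-- The CA-ML instance `J(I)` built from the restricted SMTI instance `I`: each man `m_i`
becomes a student `s_i` with credit limit 2; each woman `w_j` becomes a course `c_j`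
(plus a twin `c_j'` when `w_j` is a designated tied woman) as described; students rank
courses by the course master list `Jrank` and courses rank students by the men's
master list `mrank`. -/
def RSMTI.J {n : ℕ} (I : RSMTI n) : CA (Fin n) (Fin n ⊕ Fin n) :=
  CA.ofRanks (fun m c => I.Jacc m c)
    (fun _ c => I.Jrank c)
    (fun _ m => (I.mrank m : ℕ))
    Encodable.encode Encodable.encode Encodable.encode_injective Encodable.encode_injective
    I.Jcredits I.Jquota (fun _ => 2)
    (by
      rintro (j | j)
      · show (0 : ℚ) < (if I.des j then 1 else 2); split <;> norm_num
      · show (0 : ℚ) < 1; norm_num)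

/-! By double counting, the credits taken by the students equal the credits filled in the
courses. In `J(I)` the total capacity `∑ O(c) q⁺(c)` equals the total credit limit `2n`: every
woman contributes two credits of capacity (`c_j` alone, or `c_k` and `c_k'` in a tie). Since each
student stays within her limit and each course within its quota, completeness on one side makes
the totals agree, which forces termwise equality on the other side. -/

section CourseAllocation

variable {S C : Type*} [DecidableEq S] [DecidableEq C]

theorem mem_CM {M : Finset (S × C)} {s : S} {c : C} : c ∈ CM M s ↔ (s, c) ∈ M := by
  simp [CM]

theorem mem_SM {M : Finset (S × C)} {s : S} {c : C} : s ∈ SM M c ↔ (s, c) ∈ M := by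
  simp [SM]

variable [Fintype S] [Fintype C]

theorem CA.size_eq_sum_credits_mul_card_SM (I : CA S C) (M : Finset (S × C)) :
    I.size M = ∑ c, I.credits c * (SM M c).card := by
  calc I.size M = ∑ s, ∑ c ∈ CM M s, I.credits c := rfl
    _ = ∑ c, ∑ _s ∈ SM M c, I.credits c :=
        Finset.sum_comm' fun s c => by simp [mem_CM, mem_SM]
    _ = ∑ c, I.credits c * (SM M c).card := by
        simp only [Finset.sum_const, nsmul_eq_mul, mul_comm]

theorem CA.IsMatching.courseComplete_iff_studentComplete {I : CA S C} {M : Finset (S × C)}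
    (hM : I.IsMatching M) (hcap : ∑ c, I.credits c * I.quota c = ∑ s, I.limit s) :
    I.CourseComplete M ↔ I.StudentComplete M := by
  obtain ⟨-, hlimit, hquota⟩ := hM
  constructor
  · intro hcc s
    have htotal : ∑ s, I.O (CM M s) = ∑ s, I.limit s := by
      rw [← hcap, ← CA.size, I.size_eq_sum_credits_mul_card_SM]
      simp only [hcc _]
    exact (Finset.sum_eq_sum_iff_of_le fun s _ => hlimit s).mp htotal s (Finset.mem_univ s)
  · intro hsc c
    have htotal : ∑ c, I.credits c * (SM M c).card = ∑ c, I.credits c * I.quota c := by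
      rw [hcap, ← I.size_eq_sum_credits_mul_card_SM, CA.size]
      simp only [hsc _]
    have hcourse_le : ∀ c ∈ Finset.univ, I.credits c * (SM M c).card ≤ I.credits c * I.quota c :=
      fun c _ => mul_le_mul_of_nonneg_left (by exact_mod_cast hquota c) (I.credits_pos c).le
    have hc := (Finset.sum_eq_sum_iff_of_le hcourse_le).mp htotal c (Finset.mem_univ c)
    exact_mod_cast mul_left_cancel₀ (I.credits_pos c).ne' hc

end CourseAllocation

theorem RSMTI.J_capacity_of_woman {n : ℕ} (I : RSMTI n) (j : Fin n) :
    I.J.credits (.inl j) * I.J.quota (.inl j) + I.J.credits (.inr j) * I.J.quota (.inr j) = 2 := by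
  change I.Jcredits (.inl j) * I.Jquota (.inl j) + I.Jcredits (.inr j) * I.Jquota (.inr j) = 2
  simp only [RSMTI.Jcredits, RSMTI.Jquota]
  split_ifs <;> norm_num

theorem RSMTI.J_total_capacity_eq_total_limit {n : ℕ} (I : RSMTI n) :
    ∑ c, I.J.credits c * I.J.quota c = ∑ s, I.J.limit s := by
  rw [Fintype.sum_sum_type, ← Finset.sum_add_distrib]
  exact Finset.sum_congr rfl fun j _ => I.J_capacity_of_woman j

/-- In the CA-ML instance `J(I)` built from a restricted SMTI
instance `I`, a matching is course-complete iff it is student-complete. -/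
theorem JofRSMTI_courseComplete_iff_studentComplete
    {n : ℕ} (I : RSMTI n) (M : Finset (Fin n × (Fin n ⊕ Fin n)))
    (hM : I.J.IsMatching M) :
    I.J.CourseComplete M ↔ I.J.StudentComplete M :=
  hM.courseComplete_iff_studentComplete I.J_total_capacity_eq_total_limit
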